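/- arXiv:2401.14138 — 2 statements merged into one kernel-verified Lean document; each statement's English description precedes it below -/
import Mathlib

section
/- Let p be an odd prime, e a positive integer, and n = p^{2e}. Then the integer 𝒫_n = ∏_θ F̃_n(θ), with θ ranging over the nontrivial n-th roots of unity in ℂ, is coprime to p. -/
open Polynomial BigOperators

/-- `F n` is the truncated logarithmic polynomial `1 + x + x²/2 + ⋯ + xⁿ/n ∈ ℚ[x]`. -/
noncomputable def F (n : ℕ) : Polynomial ℚ :=
  1 + ∑ k ∈ Finset.Icc 1 n, Polynomial.C ((k : ℚ)⁻¹) * Polynomial.X ^ k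

/-- `Ln n = lcm {1, 2, …, n}`. -/
def Ln (n : ℕ) : ℕ := (Finset.Icc 1 n).lcm id

/-- `Ftilde n = Ln n • F n`, a polynomial with integer coefficients. -/
noncomputable def Ftilde (n : ℕ) : Polynomial ℚ := Polynomial.C ((Ln n : ℚ)) * F n

/-- The resultant `Res(P, Q)` of two polynomials over `ℚ`, computed in `ℂ` via the
product formula `Res(P,Q) = lc(P)^(deg Q) * ∏_{P(r)=0} Q(r)` (roots with multiplicity). -/
noncomputable def resC (P Q : Polynomial ℚ) : ℂ :=
  ((P.leadingCoeff : ℂ)) ^ Q.natDegree *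
    ((P.map (algebraMap ℚ ℂ)).roots.map (fun r => (Q.map (algebraMap ℚ ℂ)).eval r)).prod

/-- The discriminant `disc P = (−1)^(n(n−1)/2) ⬝ a_n⁻¹ ⬝ Res(P, P′)`, as a complex number. -/
noncomputable def discC (P : Polynomial ℚ) : ℂ :=
  (-1) ^ (P.natDegree.choose 2) * ((P.leadingCoeff : ℂ))⁻¹ * resC P (Polynomial.derivative P)

/-- `𝒫 n = ∏_θ F̃_n(θ)`, the product over the nontrivial `n`-th roots of unity in `ℂ`. -/
noncomputable def P (n : ℕ) : ℂ :=
  ∏ θ ∈ (Polynomial.nthRootsFinset n (1 : ℂ)).erase 1, (Polynomial.aeval θ) (Ftilde n)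

/-- `Xc m ω = ∏_{k=1}^{m−1} (1/m + ω^k + ω^{2k}/2 + ⋯ + ω^{(m−1)k}/(m−1))`. -/
noncomputable def Xc (m : ℕ) (ω : ℂ) : ℂ :=
  ∏ k ∈ Finset.Icc 1 (m - 1), ((m : ℂ)⁻¹ + ∑ j ∈ Finset.Icc 1 (m - 1), ω ^ (j * k) / (j : ℂ))

/-- `Y m = 1 + 1/2 + ⋯ + 1/m ∈ ℚ`. -/
def Y (m : ℕ) : ℚ := ∑ j ∈ Finset.Icc 1 m, (j : ℚ)⁻¹


/-! 𝒫_n is the resultant of `1 + X + ⋯ + X^(n-1)` and the integer polynomial `F̃_n`, hence an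
integer. For `n = p^m` with `m ≥ 1`, the `p`-adic valuation of `L_n` is exactly `m`, so modulo `p`
the constant term `L_n` and every coefficient `L_n / k` with `k < n` vanish, and
`F̃_n ≡ c X^n` with `c = L_n / n` prime to `p`. Since `1 + X + ⋯ + X^(n-1)` is monic with
constant term `1`, the resultant reduces to `± c^(n-1) ≠ 0` in `ZMod p`. -/

lemma Ln_eq_lcmUpto (n : ℕ) : Ln n = Nat.lcmUpto n := rfl

lemma factorization_Ln_prime_pow {p : ℕ} (hp : p.Prime) (m : ℕ) :
    (Ln (p ^ m)).factorization p = m := by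
  rw [Ln_eq_lcmUpto, Nat.factorization_lcmUpto _ hp, Nat.log_pow hp.one_lt]

lemma dvd_Ln {k n : ℕ} (hk : 1 ≤ k) (hkn : k ≤ n) : k ∣ Ln n :=
  Finset.dvd_lcm (Finset.mem_Icc.mpr ⟨hk, hkn⟩)

lemma prime_dvd_Ln_div_iff {p : ℕ} (hp : p.Prime) {m k : ℕ} (hk : 1 ≤ k) (hkn : k ≤ p ^ m) :
    p ∣ Ln (p ^ m) / k ↔ k ≠ p ^ m := by
  have hkLn := dvd_Ln hk hkn
  have hdiv : Ln (p ^ m) / k ≠ 0 :=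
    (Nat.div_pos (Nat.le_of_dvd (Nat.lcmUpto_pos _) hkLn) hk).ne'
  rw [hp.dvd_iff_one_le_factorization hdiv, Nat.factorization_div hkLn, Finsupp.tsub_apply,
    factorization_Ln_prime_pow hp]
  constructor
  · rintro h rfl
    simp [hp.factorization_self] at h
  · intro hne
    have : p ^ k.factorization p < p ^ m :=
      (Nat.le_of_dvd hk (Nat.ordProj_dvd k p)).trans_lt (lt_of_le_of_ne hkn hne)
    have := (Nat.pow_lt_pow_iff_right hp.one_lt).mp this
    omega

noncomputable def ftildeInt (n : ℕ) : ℤ[X] :=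
  C (Ln n : ℤ) + ∑ k ∈ Finset.Icc 1 n, C ((Ln n / k : ℕ) : ℤ) * X ^ k

lemma map_ftildeInt (n : ℕ) : (ftildeInt n).map (algebraMap ℤ ℚ) = Ftilde n := by
  rw [ftildeInt, Ftilde, F, Polynomial.map_add, Polynomial.map_sum, mul_add, mul_one,
    Finset.mul_sum]
  congr 1
  · simp
  refine Finset.sum_congr rfl fun k hk => ?_
  obtain ⟨hk1, hkn⟩ := Finset.mem_Icc.mp hk
  rw [Polynomial.map_mul, Polynomial.map_pow, map_C, map_X, ← mul_assoc, ← C_mul, eq_intCast,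
    Int.cast_natCast, Nat.cast_div (dvd_Ln hk1 hkn) (by positivity), div_eq_mul_inv]

lemma natDegree_ftildeInt_le (n : ℕ) : (ftildeInt n).natDegree ≤ n := by
  refine natDegree_add_le_of_degree_le (by simp) (natDegree_sum_le_of_forall_le _ _ ?_)
  intro k hk
  exact natDegree_C_mul_X_pow_le _ _ |>.trans (Finset.mem_Icc.mp hk).2

lemma map_ftildeInt_prime_pow {p : ℕ} (hp : p.Prime) {m : ℕ} (hm : m ≠ 0) :
    (ftildeInt (p ^ m)).map (Int.castRingHom (ZMod p)) =
      C ((Ln (p ^ m) / p ^ m : ℕ) : ZMod p) * X ^ p ^ m := by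
  have hpow : 1 ≤ p ^ m := Nat.one_le_pow _ _ hp.pos
  have hLn : Int.castRingHom (ZMod p) (Ln (p ^ m)) = 0 := by
    rw [eq_intCast, Int.cast_natCast, ZMod.natCast_eq_zero_iff]
    exact (dvd_pow_self p hm).trans (dvd_Ln hpow le_rfl)
  rw [ftildeInt, Polynomial.map_add, map_C, hLn, map_zero, zero_add, Polynomial.map_sum,
    Finset.sum_eq_single_of_mem _ (Finset.mem_Icc.mpr ⟨hpow, le_rfl⟩)]
  · rw [Polynomial.map_mul, Polynomial.map_pow, map_X, map_C, eq_intCast, Int.cast_natCast]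
  intro k hk hne
  obtain ⟨hk1, hkn⟩ := Finset.mem_Icc.mp hk
  have hcoeff : ((Ln (p ^ m) / k : ℕ) : ZMod p) = 0 :=
    (ZMod.natCast_eq_zero_iff _ _).mpr ((prime_dvd_Ln_div_iff hp hk1 hkn).mpr hne)
  rw [Polynomial.map_mul, map_C, eq_intCast, Int.cast_natCast, hcoeff, map_zero, zero_mul]

lemma roots_geom_sum_X {K : Type*} [CommRing K] [IsDomain K] [DecidableEq K] {n : ℕ}
    (hn : n ≠ 0) :
    (∑ i ∈ Finset.range n, (X : K[X]) ^ i).roots = (nthRoots n (1 : K)).erase 1 := by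
  have hmul : (X - C 1) * ∑ i ∈ Finset.range n, (X : K[X]) ^ i = X ^ n - C 1 := by
    rw [map_one, mul_geom_sum]
  have hne : ∑ i ∈ Finset.range n, (X : K[X]) ^ i ≠ 0 := (monic_geom_sum_X hn).ne_zero
  rw [nthRoots, ← hmul, roots_mul (mul_ne_zero (X_sub_C_ne_zero 1) hne), roots_X_sub_C,
    Multiset.singleton_add, Multiset.erase_cons_head]

lemma P_eq_resultant {n : ℕ} (hn : n ≠ 0) :
    P n = ((∑ i ∈ Finset.range n, (X : ℤ[X]) ^ i).resultant (ftildeInt n)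
      (∑ i ∈ Finset.range n, (X : ℤ[X]) ^ i).natDegree n : ℂ) := by
  set f := ∑ i ∈ Finset.range n, (X : ℤ[X]) ^ i
  have hf : f.Monic := monic_geom_sum_X hn
  have hnodup : (nthRoots n (1 : ℂ)).Nodup :=
    (Complex.isPrimitiveRoot_exp n hn).nthRoots_one_nodup
  rw [← eq_intCast (algebraMap ℤ ℂ), ← resultant_map_map, ← hf.natDegree_map (algebraMap ℤ ℂ),
    resultant_eq_prod_eval _ _ _ ((natDegree_map_le).trans (natDegree_ftildeInt_le n))
      (IsAlgClosed.splits _), (hf.map _).leadingCoeff, one_pow, one_mul, P,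
    Finset.prod_eq_multiset_prod, Finset.erase_val, nthRootsFinset, Multiset.toFinset_val,
    Multiset.dedup_eq_self.mpr hnodup, Polynomial.map_sum]
  simp only [Polynomial.map_pow, map_X]
  rw [roots_geom_sum_X hn]
  refine congrArg Multiset.prod (Multiset.map_congr rfl fun θ _ => ?_)
  rw [← map_ftildeInt, aeval_map_algebraMap, eval_map_algebraMap]

lemma isCoprime_resultant_geom_sum_X_ftildeInt {p : ℕ} (hp : p.Prime) {m : ℕ} (hm : m ≠ 0) :
    IsCoprime ((∑ i ∈ Finset.range (p ^ m), (X : ℤ[X]) ^ i).resultant (ftildeInt (p ^ m))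
      (∑ i ∈ Finset.range (p ^ m), (X : ℤ[X]) ^ i).natDegree (p ^ m)) (p : ℤ) := by
  have : Fact p.Prime := ⟨hp⟩
  set f := ∑ i ∈ Finset.range (p ^ m), (X : ℤ[X]) ^ i
  have hc : ((Ln (p ^ m) / p ^ m : ℕ) : ZMod p) ≠ 0 := by
    rw [Ne, ZMod.natCast_eq_zero_iff, prime_dvd_Ln_div_iff hp (Nat.one_le_pow _ _ hp.pos) le_rfl]
    exact fun h => h rfl
  have hcast : ((f.resultant (ftildeInt (p ^ m)) f.natDegree (p ^ m) : ℤ) : ZMod p) =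
      ((Ln (p ^ m) / p ^ m : ℕ) : ZMod p) ^ f.natDegree * (-1) ^ (f.natDegree * p ^ m) := by
    rw [← eq_intCast (Int.castRingHom (ZMod p)), ← resultant_map_map,
      map_ftildeInt_prime_pow hp hm, resultant_C_mul_right,
      resultant_X_pow_right _ _ _ natDegree_map_le]
    simp [f, Polynomial.map_sum, coeff_zero_eq_eval_zero, eval_geom_sum, hp.pos.ne']
  refine ((Nat.prime_iff_prime_int.mp hp).coprime_iff_not_dvd.mpr ?_).symm
  rw [← ZMod.intCast_zmod_eq_zero_iff_dvd, hcast]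
  exact mul_ne_zero (pow_ne_zero _ hc) (pow_ne_zero _ (neg_ne_zero.mpr one_ne_zero))

theorem stmt1_general (p e n : ℕ) (hp : p.Prime) (he : 0 < e) (hn : n = p ^ (2 * e)) :
    ∃ z : ℤ, (z : ℂ) = P n ∧ IsCoprime z (p : ℤ) := by
  subst hn
  exact ⟨_, (P_eq_resultant (pow_ne_zero _ hp.ne_zero)).symm,
    isCoprime_resultant_geom_sum_X_ftildeInt hp (by omega)⟩

/-- If `n = p^(2e)` for an odd prime `p` and `e ≥ 1`, then the integer
`𝒫 n` is coprime to `p`. -/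
theorem stmt1 (p e n : ℕ) (hp : p.Prime) (hodd : p ≠ 2) (he : 0 < e) (hn : n = p ^ (2 * e)) :
    ∃ z : ℤ, (z : ℂ) = P n ∧ IsCoprime z (p : ℤ) :=
  stmt1_general p e n hp he hn
end

section
/- If n ≡ 2 or 3 (mod 4), then the discriminant of F_n(x) is a negative rational number. -/
/-!
Over `ℂ` the derivative `F_n' = 1 + x + ⋯ + x^{n-1}` is `∏_θ (x - θ)`, `θ` running over the
nontrivial `n`-th roots of unity, so the product formula for the resultant gives
`disc F_n = (-1)^{n(n-1)/2} n ∏_θ F_n(θ)`; the sign in front is `-1` exactly when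
`n ≡ 2, 3 (mod 4)`. Rationality is free, since the discriminant agrees with `Polynomial.discr`.

The product is positive because its factors come in conjugate pairs (plus `F_n(-1)` when `n` is
even) and each has positive real part. For the latter, summing by parts twice against the convex
sequence `1/k` writes `∑_{k ≤ n} θ^k / k` as a nonnegative combination of the sums
`∑_{j ≤ m} ∑_{k ≤ j} θ^k`, whose real parts are at least `-(m + 1)/2` by Fejér's identity
`|1 + θ + ⋯ + θ^m|² = m + 1 + 2 Re ∑_{j ≤ m} ∑_{k ≤ j} θ^k`; this gives `Re ∑ θ^k / k > -3/4`.
-/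

open Polynomial BigOperators

open Finset ComplexConjugate

lemma resC_eq_resultant_map (P Q : ℚ[X]) :
    resC P Q = (P.map (algebraMap ℚ ℂ)).resultant (Q.map (algebraMap ℚ ℂ)) := by
  rw [resultant_eq_prod_eval _ _ _ le_rfl (IsAlgClosed.splits _), resC, leadingCoeff_map,
    natDegree_map, eq_ratCast]

lemma discC_eq_discr {P : ℚ[X]} (hP : 0 < P.degree) : discC P = (P.discr : ℂ) := by
  have hlc : P.leadingCoeff ≠ 0 := leadingCoeff_ne_zero.2 (ne_zero_of_degree_gt hP)
  rw [discC, resC_eq_resultant_map, resultant_map_map, natDegree_map, natDegree_map,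
    natDegree_derivative, resultant_deriv hP, Nat.choose_two_right, eq_ratCast]
  push_cast
  have hsign : ((-1 : ℂ) ^ (P.natDegree * (P.natDegree - 1) / 2)) ^ 2 = 1 := by
    rw [← pow_mul, pow_mul', neg_one_sq, one_pow]
  have hlc' : (P.leadingCoeff : ℂ) ≠ 0 := by exact_mod_cast hlc
  field_simp
  linear_combination (P.discr : ℂ) * hsign

lemma geom_sum_X_eq_prod_erase {R : Type*} [CommRing R] [IsDomain R] [DecidableEq R] {ζ : R}
    {n : ℕ} (hn : 0 < n) (hζ : IsPrimitiveRoot ζ n) :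
    ∑ j ∈ range n, (X : R[X]) ^ j = ∏ θ ∈ (nthRootsFinset n (1 : R)).erase 1, (X - C θ) := by
  apply mul_left_cancel₀ (X_sub_C_ne_zero (1 : R))
  rw [mul_prod_erase _ (fun θ => X - C θ) (one_mem_nthRootsFinset hn),
    ← X_pow_sub_one_eq_prod hn hζ, C_1, mul_geom_sum]

lemma aeval_conj {p : ℚ[X]} (z : ℂ) : aeval (conj z) p = conj (aeval z p) :=
  aeval_algHom_apply (Complex.conjAe.toAlgHom.restrictScalars ℚ) z p

lemma sum_Icc_one_eq_sum_range {M : Type*} [AddCommMonoid M] (f : ℕ → M) (N : ℕ) :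
    ∑ k ∈ Icc 1 N, f k = ∑ j ∈ range N, f (j + 1) := by
  rw [range_eq_Ico, sum_Ico_add' f 0 N 1, zero_add, Ico_add_one_right_eq_Icc]

lemma sum_Icc_smul_eq_sum_second_diff {R M : Type*} [CommRing R] [AddCommGroup M] [Module R M]
    (c : ℕ → R) (u : ℕ → M) (N : ℕ) :
    ∑ k ∈ Icc 1 N, c k • u k =
      ∑ m ∈ Ico 1 N, (c m - 2 * c (m + 1) + c (m + 2)) • ∑ j ∈ Icc 1 m, ∑ k ∈ Icc 1 j, u k
        + (c N - c (N + 1)) • ∑ j ∈ Icc 1 N, ∑ k ∈ Icc 1 j, u k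
        + c (N + 1) • ∑ k ∈ Icc 1 N, u k := by
  induction N with
  | zero => simp
  | succ N ih =>
    rcases N.eq_zero_or_pos with rfl | hN
    · simp only [zero_add, Icc_self, sum_singleton, Ico_self, sum_empty]
      module
    rw [sum_Icc_succ_top (by omega), ih, sum_Ico_succ_top hN, sum_Icc_succ_top (by omega),
      sum_Icc_succ_top (by omega : 1 ≤ N + 1)]
    module

lemma sum_second_diff_mul_succ {R : Type*} [CommRing R] (c : ℕ → R) {N : ℕ} (hN : 1 ≤ N) :
    ∑ m ∈ Ico 1 N, (c m - 2 * c (m + 1) + c (m + 2)) * (m + 1) + (c N - c (N + 1)) * (N + 1)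
      = 2 * c 1 - c 2 - c (N + 1) := by
  induction N, hN using Nat.le_induction with
  | base => simp; ring
  | succ N hN ih =>
    rw [sum_Ico_succ_top hN]
    push_cast
    linear_combination ih

lemma normSq_geom_sum {θ : ℂ} (hθ : ‖θ‖ = 1) (m : ℕ) :
    Complex.normSq (∑ j ∈ range (m + 1), θ ^ j)
      = m + 1 + 2 * (∑ j ∈ Icc 1 m, ∑ k ∈ Icc 1 j, θ ^ k).re := by
  induction m with
  | zero => simp
  | succ m ih =>
    have hθ0 : θ ≠ 0 := norm_ne_zero_iff.1 (hθ ▸ one_ne_zero)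
    have hconj (k : ℕ) : conj (θ ^ k) = (θ ^ k)⁻¹ :=
      (Complex.inv_eq_conj (by rw [norm_pow, hθ, one_pow])).symm
    -- `θ^j * conj θ^(m+1) = conj θ^(m+1-j)`: reflect `range (m+1)` onto `Icc 1 (m+1)`
    have hcross : (∑ j ∈ range (m + 1), θ ^ j) * conj (θ ^ (m + 1))
        = conj (∑ k ∈ Icc 1 (m + 1), θ ^ k) := by
      rw [map_sum, sum_mul, hconj]
      refine sum_nbij' (fun j => m + 1 - j) (fun k => m + 1 - k) ?_ ?_ ?_ ?_ ?_
        <;> intro j hj <;> simp only [mem_range, mem_Icc] at hj ⊢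
      · omega
      · omega
      · omega
      · omega
      · rw [hconj, pow_sub₀ _ hθ0 hj.le, mul_inv, inv_inv, mul_comm]
    rw [sum_range_succ, Complex.normSq_add, ih, hcross, Complex.conj_re,
      Complex.normSq_eq_norm_sq, norm_pow, hθ, one_pow,
      sum_Icc_succ_top (by omega) fun j => ∑ k ∈ Icc 1 j, θ ^ k, Complex.add_re]
    push_cast
    ring

lemma re_sum_fejer_ge {θ : ℂ} (hθ : ‖θ‖ = 1) (m : ℕ) :
    -((m : ℝ) + 1) / 2 ≤ (∑ j ∈ Icc 1 m, ∑ k ∈ Icc 1 j, θ ^ k).re := by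
  have := normSq_geom_sum hθ m
  linarith [Complex.normSq_nonneg (∑ j ∈ range (m + 1), θ ^ j)]

lemma re_sum_smul_pow_ge {θ : ℂ} (hθ : ‖θ‖ = 1) {N : ℕ} (hN : 1 ≤ N)
    (hA : ∑ k ∈ Icc 1 N, θ ^ k = 0) {c : ℕ → ℝ}
    (hconv : ∀ m ∈ Ico 1 N, 0 ≤ c m - 2 * c (m + 1) + c (m + 2)) (hanti : 0 ≤ c N - c (N + 1)) :
    -(2 * c 1 - c 2 - c (N + 1)) / 2 ≤ (∑ k ∈ Icc 1 N, c k • θ ^ k).re := by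
  rw [sum_Icc_smul_eq_sum_second_diff, hA, smul_zero, add_zero, Complex.add_re, Complex.re_sum]
  simp only [Complex.smul_re]
  calc -(2 * c 1 - c 2 - c (N + 1)) / 2
      = ∑ m ∈ Ico 1 N, (c m - 2 * c (m + 1) + c (m + 2)) * (-((m : ℝ) + 1) / 2)
          + (c N - c (N + 1)) * (-((N : ℝ) + 1) / 2) := by
        rw [← sum_second_diff_mul_succ c hN]
        simp only [mul_div_assoc', mul_neg, neg_div, ← sum_div, sum_neg_distrib]
        ring
    _ ≤ _ := add_le_add
        (sum_le_sum fun m hm => mul_le_mul_of_nonneg_left (re_sum_fejer_ge hθ m) (hconv m hm))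
        (mul_le_mul_of_nonneg_left (re_sum_fejer_ge hθ N) hanti)

lemma coeff_F (n j : ℕ) :
    (F n).coeff j = if j = 0 then 1 else if j ≤ n then (j : ℚ)⁻¹ else 0 := by
  simp only [F, coeff_add, coeff_one, finsetSum_coeff, coeff_C_mul, coeff_X_pow, mul_ite,
    mul_one, mul_zero, sum_ite_eq, mem_Icc]
  split_ifs <;> first | omega | simp_all

lemma natDegree_F {n : ℕ} (hn : n ≠ 0) : (F n).natDegree = n :=
  natDegree_eq_of_le_of_coeff_ne_zero
    (natDegree_le_iff_coeff_eq_zero.2 fun j hj => by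
      rw [coeff_F, if_neg (by omega), if_neg (by omega)])
    (by rw [coeff_F, if_neg hn, if_pos le_rfl]; exact inv_ne_zero (Nat.cast_ne_zero.2 hn))

lemma leadingCoeff_F {n : ℕ} (hn : n ≠ 0) : (F n).leadingCoeff = (n : ℚ)⁻¹ := by
  rw [leadingCoeff, natDegree_F hn, coeff_F, if_neg hn, if_pos le_rfl]

lemma derivative_F (n : ℕ) : derivative (F n) = ∑ j ∈ range n, (X : ℚ[X]) ^ j := by
  ext j
  rw [coeff_derivative, coeff_F, if_neg j.succ_ne_zero, finsetSum_coeff]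
  simp only [coeff_X_pow, sum_ite_eq, mem_range]
  by_cases h : j < n
  · rw [if_pos (show j + 1 ≤ n by omega), if_pos h]
    push_cast
    exact inv_mul_cancel₀ (by positivity)
  · rw [if_neg (by omega), if_neg h, zero_mul]

lemma aeval_F (n : ℕ) (θ : ℂ) :
    aeval θ (F n) = 1 + ∑ k ∈ Icc 1 n, (k : ℝ)⁻¹ • θ ^ k := by
  simp [F, Complex.real_smul]

lemma discC_F {n : ℕ} (hn : 0 < n) :
    discC (F n) = (-1) ^ n.choose 2 * n *
      ∏ θ ∈ (nthRootsFinset n (1 : ℂ)).erase 1, aeval θ (F n) := by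
  have hζ := Complex.isPrimitiveRoot_exp n hn.ne'
  have hcard : ((nthRootsFinset n (1 : ℂ)).erase 1).card = n - 1 := by
    rw [card_erase_of_mem (one_mem_nthRootsFinset hn), hζ.card_nthRootsFinset]
  have hderiv : (derivative (F n)).map (algebraMap ℚ ℂ) =
      ∏ θ ∈ (nthRootsFinset n (1 : ℂ)).erase 1, (X - C θ) := by
    rw [derivative_F, ← geom_sum_X_eq_prod_erase hn hζ]
    simp only [Polynomial.map_sum, Polynomial.map_pow, Polynomial.map_X]
  rw [discC, resC_eq_resultant_map, leadingCoeff_F hn.ne', hderiv,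
    resultant_prod_right _ _ _ _ le_rfl (by simp [leadingCoeff_X_sub_C])]
  have hres (θ : ℂ) : ((F n).map (algebraMap ℚ ℂ)).resultant (X - C θ) n 1 =
      (-1) ^ n * aeval θ (F n) := by
    rw [resultant_X_sub_C_right _ _ _ (by rw [natDegree_map, natDegree_F hn.ne']),
      eval_map_algebraMap]
  simp only [natDegree_X_sub_C, natDegree_map, natDegree_F hn.ne', hres, prod_mul_distrib,
    prod_const, hcard, ← pow_mul, (Nat.even_mul_pred_self n).neg_one_pow, one_mul]
  push_cast
  rw [inv_inv]

lemma re_aeval_F_pos {n : ℕ} {θ : ℂ} (hθn : θ ^ n = 1) (hθ1 : θ ≠ 1) :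
    0 < (aeval θ (F n)).re := by
  rcases n.eq_zero_or_pos with rfl | hn
  · simp [aeval_F]
  have hθ : ‖θ‖ = 1 := Complex.norm_eq_one_of_pow_eq_one hθn hn.ne'
  have hA : ∑ k ∈ Icc 1 n, θ ^ k = 0 := by
    simp only [sum_Icc_one_eq_sum_range, pow_succ', ← mul_sum, geom_sum_eq hθ1, hθn, sub_self,
      zero_div, mul_zero]
  have hconv (m : ℕ) (hm : m ∈ Ico 1 n) :
      0 ≤ (m : ℝ)⁻¹ - 2 * ((m + 1 : ℕ) : ℝ)⁻¹ + ((m + 2 : ℕ) : ℝ)⁻¹ := by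
    have hm0 : (0 : ℝ) < m := by exact_mod_cast (mem_Ico.1 hm).1
    rw [show (m : ℝ)⁻¹ - 2 * ((m + 1 : ℕ) : ℝ)⁻¹ + ((m + 2 : ℕ) : ℝ)⁻¹
        = 2 / (m * (m + 1) * (m + 2)) by push_cast; field_simp; ring]
    positivity
  have hanti : 0 ≤ (n : ℝ)⁻¹ - ((n + 1 : ℕ) : ℝ)⁻¹ :=
    sub_nonneg.2 (inv_anti₀ (by positivity) (by push_cast; linarith))
  have hbound := re_sum_smul_pow_ge hθ hn hA (c := fun k : ℕ => (k : ℝ)⁻¹) hconv hanti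
  rw [aeval_F, Complex.add_re, Complex.one_re]
  norm_num at hbound ⊢
  linarith [inv_pos.2 (by positivity : (0 : ℝ) < n + 1)]

section ComplexOrder

open scoped ComplexOrder

lemma prod_pos_of_conj_symm {ι : Type*} [DecidableEq ι] {σ : ι → ι}
    (hσ : Function.Involutive σ) (s : Finset ι) (hs : ∀ i ∈ s, σ i ∈ s) {f : ι → ℂ}
    (hf : ∀ i ∈ s, f (σ i) = conj (f i)) (hpos : ∀ i ∈ s, 0 < (f i).re) :
    0 < ∏ i ∈ s, f i := by
  induction s using Finset.strongInduction with
  | H s ih =>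
  rcases s.eq_empty_or_nonempty with rfl | ⟨i, hi⟩
  · simp
  by_cases hfix : σ i = i
  · have hreal : (f i).im = 0 := by
      have := hf i hi
      rw [hfix] at this
      exact Complex.conj_eq_iff_im.1 this.symm
    rw [← mul_prod_erase s f hi]
    refine mul_pos (Complex.lt_def.2 ⟨hpos i hi, hreal.symm⟩) (ih _ (erase_ssubset hi) ?_
      (fun j hj => hf j (mem_of_mem_erase hj)) (fun j hj => hpos j (mem_of_mem_erase hj)))
    intro j hj
    refine mem_erase.2 ⟨fun h => (ne_of_mem_erase hj) ?_, hs j (mem_of_mem_erase hj)⟩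
    rw [← hσ j, h, hfix]
  · have hσi : σ i ∈ s.erase i := mem_erase.2 ⟨hfix, hs i hi⟩
    have hfi : f i ≠ 0 := fun h => (hpos i hi).ne' (by rw [h, Complex.zero_re])
    rw [← mul_prod_erase s f hi, ← mul_prod_erase _ f hσi, ← mul_assoc, hf i hi,
      Complex.mul_conj]
    refine mul_pos (Complex.zero_lt_real.2 (Complex.normSq_pos.2 hfi))
      (ih _ ((erase_ssubset hσi).trans (erase_ssubset hi)) ?_
        (fun j hj => hf j (mem_of_mem_erase (mem_of_mem_erase hj)))
        (fun j hj => hpos j (mem_of_mem_erase (mem_of_mem_erase hj))))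
    intro j hj
    obtain ⟨hjσi, hji, hjs⟩ : j ≠ σ i ∧ j ≠ i ∧ j ∈ s := by
      simpa only [mem_erase] using hj
    refine mem_erase.2 ⟨fun h => hji ?_, mem_erase.2 ⟨fun h => hjσi ?_, hs j hjs⟩⟩
    · rw [← hσ j, h, hσ i]
    · rw [← hσ j, h]

lemma prod_aeval_F_pos {n : ℕ} (hn : 0 < n) :
    0 < ∏ θ ∈ (nthRootsFinset n (1 : ℂ)).erase 1, aeval θ (F n) := by
  have hmem {θ : ℂ} : θ ∈ (nthRootsFinset n (1 : ℂ)).erase 1 ↔ θ ≠ 1 ∧ θ ^ n = 1 := by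
    rw [mem_erase, mem_nthRootsFinset hn]
  refine prod_pos_of_conj_symm Complex.conj_conj _ (fun θ hθ => ?_) (fun θ _ => aeval_conj θ)
    (fun θ hθ => re_aeval_F_pos (hmem.1 hθ).2 (hmem.1 hθ).1)
  obtain ⟨hθ1, hθn⟩ := hmem.1 hθ
  exact hmem.2 ⟨fun h => hθ1 (by simpa using congrArg conj h), by rw [← map_pow, hθn, map_one]⟩

end ComplexOrder

lemma odd_choose_two {n : ℕ} (h : n % 4 = 2 ∨ n % 4 = 3) : Odd (n.choose 2) := by
  obtain ⟨q, rfl | rfl⟩ : ∃ q, n = 4 * q + 2 ∨ n = 4 * q + 3 := ⟨n / 4, by omega⟩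
  · rw [Nat.choose_two_right, show (4 * q + 2) * (4 * q + 2 - 1) = 2 * (8 * q * q + 6 * q + 1) by
      rw [show 4 * q + 2 - 1 = 4 * q + 1 by omega]; ring, Nat.mul_div_cancel_left _ two_pos]
    exact ⟨4 * q * q + 3 * q, by ring⟩
  · rw [Nat.choose_two_right, show (4 * q + 3) * (4 * q + 3 - 1) = 2 * (8 * q * q + 10 * q + 3) by
      rw [show 4 * q + 3 - 1 = 4 * q + 2 by omega]; ring, Nat.mul_div_cancel_left _ two_pos]
    exact ⟨4 * q * q + 5 * q + 1, by ring⟩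

/-- If `n ≡ 2, 3 (mod 4)` then `disc(F n)` is a negative rational number. -/
theorem stmt4 (n : ℕ) (h : n % 4 = 2 ∨ n % 4 = 3) :
    ∃ r : ℚ, r < 0 ∧ (r : ℂ) = discC (F n) := by
  have hn : 0 < n := by omega
  have hdeg : 0 < (F n).degree :=
    natDegree_pos_iff_degree_pos.1 (by rw [natDegree_F hn.ne']; exact hn)
  refine ⟨(F n).discr, ?_, (discC_eq_discr hdeg).symm⟩
  open scoped ComplexOrder in
  have hneg : (((F n).discr : ℝ) : ℂ) < 0 := by
    rw [Complex.ofReal_ratCast, ← discC_eq_discr hdeg, discC_F hn, (odd_choose_two h).neg_one_pow,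
      neg_one_mul, neg_mul, neg_lt_zero]
    exact mul_pos (by exact_mod_cast hn) (prod_aeval_F_pos hn)
  exact_mod_cast Complex.real_lt_real.1 (hneg.trans_eq Complex.ofReal_zero.symm)
end
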